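/- For every permutation σ, the Zeilberger statistic does not decrease under stack sorting applied in reverse orientation: Rzeil(S(σ)) ≥ Rzeil(σ), where Rzeil(π) is the largest k such that (n−k+1)(n−k+2)…n occurs as a (not necessarily consecutive) subword of π, n being the length of π. -/

import Mathlib

/-- Stack sorting with fuel (fuel = length always suffices). -/
def stackSortAux : ℕ → List ℕ → List ℕ
  | 0, _ => []
  | _ + 1, [] => []
  | fuel + 1, x :: xs =>
    let l := x :: xs
    let m := l.foldr max 0
    stackSortAux fuel (l.takeWhile (· ≠ m)) ++
      stackSortAux fuel ((l.dropWhile (· ≠ m)).tail) ++ [m]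

/-- The stack sorting operator `S`: `S(ε) = ε` and `S(α n β) = S(α) S(β) n`
where `n` is the maximum element. -/
def stackSort (l : List ℕ) : List ℕ := stackSortAux l.length l

/-- `σ` avoids the pattern 231. -/
def Avoids231 (σ : List ℕ) : Prop :=
  ¬ ∃ i j k, i < j ∧ j < k ∧ k < σ.length ∧
      σ.getD k 0 < σ.getD i 0 ∧ σ.getD i 0 < σ.getD j 0

/-- `σ` avoids the pattern 132. -/
def Avoids132 (σ : List ℕ) : Prop :=
  ¬ ∃ i j k, i < j ∧ j < k ∧ k < σ.length ∧
      σ.getD i 0 < σ.getD k 0 ∧ σ.getD k 0 < σ.getD j 0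

/-- Binary trees with natural number labels. -/
inductive BTree where
  | leaf : BTree
  | node : BTree → ℕ → BTree → BTree

def BTree.inorder : BTree → List ℕ
  | .leaf => []
  | .node l n r => l.inorder ++ [n] ++ r.inorder

def BTree.postorder : BTree → List ℕ
  | .leaf => []
  | .node l n r => l.postorder ++ r.postorder ++ [n]

/-- A tree is decreasing when labels strictly decrease from root to leaves. -/
def BTree.Decreasing : BTree → Prop
  | .leaf => True
  | .node l n r =>
      l.Decreasing ∧ r.Decreasing ∧
      (∀ x ∈ l.inorder, x < n) ∧ (∀ x ∈ r.inorder, x < n)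

/-- The underlying unlabeled shape of a tree (labels replaced by `0`). -/
def BTree.shape : BTree → BTree
  | .leaf => .leaf
  | .node l _ r => .node l.shape 0 r.shape

def BTree.map (f : ℕ → ℕ) : BTree → BTree
  | .leaf => .leaf
  | .node l n r => .node (l.map f) (f n) (r.map f)

/-- Labels on the rightmost branch from the root. -/
def BTree.rightBranch : BTree → List ℕ
  | .leaf => []
  | .node _ n r => n :: r.rightBranch

/-- Labels on the leftmost branch from the root. -/
def BTree.leftBranch : BTree → List ℕ
  | .leaf => []
  | .node l n _ => n :: l.leftBranch

def TinAux : ℕ → List ℕ → BTree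
  | 0, _ => .leaf
  | _ + 1, [] => .leaf
  | fuel + 1, x :: xs =>
    let l := x :: xs
    let m := l.foldr max 0
    .node (TinAux fuel (l.takeWhile (· ≠ m))) m
          (TinAux fuel ((l.dropWhile (· ≠ m)).tail))

/-- The decreasing binary tree whose in-order reading is `l`. -/
def Tin (l : List ℕ) : BTree := TinAux l.length l

def PpermAux : ℕ → List ℕ → List ℕ
  | 0, _ => []
  | _ + 1, [] => []
  | fuel + 1, x :: xs =>
    let l := x :: xs
    let m := l.foldr max 0
    let α := l.takeWhile (· ≠ m)
    let β := (l.dropWhile (· ≠ m)).tail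
    (PpermAux fuel α).map (· + β.length) ++ [m] ++
      PpermAux fuel (β.map (· - α.length))

/-- The bijection `P` from 231-avoiding to 132-avoiding permutations,
`P(ε) = ε` and `P(α ⊕ (1 ⊖ β)) = (P(α) ⊕ 1) ⊖ P(β)`. -/
def Pperm (l : List ℕ) : List ℕ := PpermAux l.length l

/-- Direct sum of permutations: `α ⊕ β`. -/
def osum (α β : List ℕ) : List ℕ := α ++ β.map (· + α.length)

/-- Skew sum of permutations: `α ⊖ β`. -/
def ossum (α β : List ℕ) : List ℕ := α.map (· + β.length) ++ β

def lrP : ℕ → List ℕ × List ℕ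
  | 0 => ([], [])
  | m + 1 => (ossum [1] (lrP m).2, osum (lrP m).1 [1])

/-- `λ_n`: `λ_{m+1} = 1 ⊖ ρ_m`. -/
def lamP (n : ℕ) : List ℕ := (lrP n).1

/-- `ρ_n`: `ρ_{m+1} = λ_m ⊕ 1`. -/
def rhoP (n : ℕ) : List ℕ := (lrP n).2

/-- `s` and `p` are order isomorphic lists. -/
def OrderIsoList (s p : List ℕ) : Prop :=
  s.length = p.length ∧
  ∀ i j, i < s.length → j < s.length →
    (s.getD i 0 < s.getD j 0 ↔ p.getD i 0 < p.getD j 0)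

/-- `σ` contains the pattern `π`. -/
def Contains (σ π : List ℕ) : Prop :=
  ∃ s : List ℕ, s.Sublist σ ∧ OrderIsoList s π

/-- The up-down word of a permutation (`true` = ascent `u`, `false` = descent `d`). -/
def updown (l : List ℕ) : List Bool :=
  (l.zip l.tail).map (fun p => decide (p.1 < p.2))

/-- No value larger than `max x y` occurs (strictly) between `x` and `y` in `l`. -/
def NoLargerBetween (l : List ℕ) (x y : ℕ) : Prop :=
  ∀ i j k, i < j → j < k → k < l.length →
    ((l.getD i 0 = x ∧ l.getD k 0 = y) ∨ (l.getD i 0 = y ∧ l.getD k 0 = x)) →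
    l.getD j 0 ≤ max x y

/-- The basic operators: stack sorting `S` and reversal `R`. -/
inductive SOp where
  | s : SOp
  | r : SOp

def applyOp : SOp → List ℕ → List ℕ
  | .s => stackSort
  | .r => List.reverse

/-- A composition of operators from `{S, R}`. -/
def applyOps (ops : List SOp) : List ℕ → List ℕ :=
  ops.foldr (fun op f => applyOp op ∘ f) id

/-- `i` is the position of a left-to-right maximum of `l`. -/
def LRmaxPos (l : List ℕ) (i : ℕ) : Prop :=
  i < l.length ∧ ∀ j, j < i → l.getD j 0 < l.getD i 0

/-- `i` is the position of a right-to-left maximum of `l`. -/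
def RLmaxPos (l : List ℕ) (i : ℕ) : Prop :=
  i < l.length ∧ ∀ j, i < j → j < l.length → l.getD j 0 < l.getD i 0

/-- The reverse Zeilberger statistic: the largest `k` such that
`(n-k+1) … (n-1) n` is a subword of `l`, where `n = l.length`. -/
noncomputable def Rzeil (l : List ℕ) : ℕ :=
  sSup {k | (List.range' (l.length - k + 1) k).Sublist l}

/-!
Write `l = α m β` with `m` the maximum, so that `S(l) = S(α) S(β) m`. An increasing
subsequence of `l` either avoids `m`, and then splits into increasing subsequences of `α` and
of `β`, or ends at `m`, and then its remaining terms lie in `α`. By induction every increasing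
subsequence of `l` is one of `S(l)`. Since the top values `n-k+1, …, n` form an increasing
subsequence and `S` preserves length, each `k` admissible for `σ` is admissible for `S(σ)`.
-/

namespace List

lemma foldr_max_mem_of_ne_nil {α : Type*} [LinearOrder α] [OrderBot α] {l : List α} (hl : l ≠ []) :
    l.foldr max ⊥ ∈ l :=
  maximum_mem (foldr_max_of_ne_nil hl).symm

lemma takeWhile_ne_append_cons_tail_dropWhile {α : Type*} [DecidableEq α] {l : List α} {m : α}
    (hm : m ∈ l) :
    l.takeWhile (· ≠ m) ++ m :: (l.dropWhile (· ≠ m)).tail = l := by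
  have hne : l.dropWhile (· ≠ m) ≠ [] := by
    rw [Ne, dropWhile_eq_nil_iff]
    exact fun h => by simpa using h m hm
  have hhead : (l.dropWhile (· ≠ m)).head hne = m := by
    simpa using head_dropWhile_not (· ≠ m) hne
  conv_rhs => rw [← takeWhile_append_dropWhile (p := (· ≠ m)) (l := l), ← cons_head_tail hne]
  rw [hhead]

end List

open List

lemma exists_stackSortAux_succ_eq (fuel : ℕ) {l : List ℕ} (hl : l ≠ []) :
    ∃ α m β, l = α ++ m :: β ∧ (∀ a ∈ l, a ≤ m) ∧
      stackSortAux (fuel + 1) l = stackSortAux fuel α ++ stackSortAux fuel β ++ [m] := by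
  obtain ⟨x, xs, rfl⟩ := exists_cons_of_ne_nil hl
  exact ⟨_, _, _, (takeWhile_ne_append_cons_tail_dropWhile (foldr_max_mem_of_ne_nil hl)).symm,
    fun a ha => le_max_of_le ha le_rfl, rfl⟩

lemma stackSortAux_zero (l : List ℕ) : stackSortAux 0 l = [] := by
  cases l <;> rfl

lemma stackSortAux_perm {fuel : ℕ} {l : List ℕ} (hl : l.length ≤ fuel) :
    (stackSortAux fuel l).Perm l := by
  induction fuel generalizing l with
  | zero => rw [length_eq_zero_iff.1 (Nat.le_zero.1 hl), stackSortAux_zero]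
  | succ fuel ih =>
    rcases eq_or_ne l [] with rfl | hne
    · rfl
    obtain ⟨α, m, β, rfl, -, hS⟩ := exists_stackSortAux_succ_eq fuel hne
    simp only [length_append, length_cons] at hl
    rw [hS]
    calc _ ~ α ++ β ++ [m] := ((ih (by omega)).append (ih (by omega))).append_right _
      _ ~ α ++ m :: β := by
        rw [append_assoc]
        exact (perm_append_singleton m β).append_left α

lemma sublist_stackSortAux_of_pairwise_lt {fuel : ℕ} {s l : List ℕ} (hs : s.Pairwise (· < ·))
    (hsl : s <+ l) (hl : l.length ≤ fuel) : s <+ stackSortAux fuel l := by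
  induction fuel generalizing s l with
  | zero =>
    rw [length_eq_zero_iff.1 (Nat.le_zero.1 hl)] at hsl
    rw [sublist_nil.1 hsl]
    exact nil_sublist _
  | succ fuel ih =>
    rcases eq_or_ne l [] with rfl | hne
    · rw [sublist_nil.1 hsl]
      exact nil_sublist _
    obtain ⟨α, m, β, rfl, hmax, hS⟩ := exists_stackSortAux_succ_eq fuel hne
    simp only [length_append, length_cons] at hl
    obtain ⟨t₁, t₂, rfl, h₁, h₂⟩ := sublist_append_iff.1 hsl
    have hs₁ := ih (hs.sublist (sublist_append_left _ _)) h₁ (by omega)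
    rw [hS]
    rcases sublist_cons_iff.1 h₂ with h₂ | ⟨t, rfl, ht⟩
    · have hs₂ := ih (hs.sublist (sublist_append_right _ _)) h₂ (by omega)
      exact (hs₁.append hs₂).trans (sublist_append_left _ _)
    · -- the terms of `s` after the maximum `m` would have to exceed it
      obtain rfl : t = [] := eq_nil_iff_forall_not_mem.2 fun b hb => by
        have hmb : m < b := rel_of_pairwise_cons (pairwise_append.1 hs).2.1 hb
        have hbm : b ≤ m := hmax b (mem_append_right _ (mem_cons_of_mem _ (ht.subset hb)))
        omega
      rw [append_assoc]
      exact hs₁.append (sublist_append_right _ _)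

lemma stackSort_perm (l : List ℕ) : (stackSort l).Perm l :=
  stackSortAux_perm le_rfl

lemma sublist_stackSort_of_pairwise_lt {s l : List ℕ} (hs : s.Pairwise (· < ·)) (hsl : s <+ l) :
    s <+ stackSort l :=
  sublist_stackSortAux_of_pairwise_lt hs hsl le_rfl

/-- `Rzeil(S(σ)) ≥ Rzeil(σ)` for every permutation `σ`. -/
theorem rzeil_stackSort_ge :
    ∀ σ : List ℕ, σ.Perm (List.range' 1 σ.length) →
      Rzeil σ ≤ Rzeil (stackSort σ) := by
  intro σ _
  have hlen : (stackSort σ).length = σ.length := (stackSort_perm σ).length_eq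
  refine csSup_le_csSup ⟨(stackSort σ).length, fun k hk => by simpa using hk.length_le⟩
    ⟨0, by simp⟩ fun k hk => ?_
  rw [Set.mem_ofPred_eq, hlen]
  exact sublist_stackSort_of_pairwise_lt pairwise_lt_range' hk
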